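/- arXiv:2203.13346 — 3 statements merged into one kernel-verified Lean document; each statement's English description precedes it below -/
import Mathlib

section
/- Let H be a real inner product space, E : H → ℝ, T > 0, and let γ : ℝ → H solve the gradient flow of E on [0,T), with t ↦ ∇E(γ(t)) continuous on [0,T). Then for every t ∈ [0,T), ‖γ(t) − γ(0)‖ ≤ √( t · (E(γ(0)) − E(γ(t))) ). -/
/-!
For every `c > 0`, AM-GM gives `‖g‖ ≤ (c ‖g‖² + 1 / c) / 2` pointwise, and `‖g‖²` is exactly the
rate at which `E` decreases along the flow. The mean value inequality therefore yields
`2 ‖γ t - γ 0‖ ≤ c (E (γ 0) - E (γ t)) + t / c`, and optimising over `c` gives the square root.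
This is the Cauchy–Schwarz step of the integrated argument, carried out pointwise.
-/

open Set

theorem HasGradientAt.hasDerivAt_comp {H : Type*} [NormedAddCommGroup H] [InnerProductSpace ℝ H]
    [CompleteSpace H] {E : H → ℝ} {γ : ℝ → H} {v w : H} {t : ℝ}
    (hE : HasGradientAt E v (γ t)) (hγ : HasDerivAt γ w t) :
    HasDerivAt (E ∘ γ) (inner ℝ v w) t := by
  simpa using hE.hasFDerivAt.comp_hasDerivAt t hγ

theorem two_mul_le_mul_sq_add_inv (x : ℝ) {c : ℝ} (hc : 0 < c) : 2 * x ≤ c * x ^ 2 + c⁻¹ := by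
  have hsq : c * (x - c⁻¹) ^ 2 = c * x ^ 2 + c⁻¹ - 2 * x := by field_simp; ring
  nlinarith [hsq, show 0 ≤ c * (x - c⁻¹) ^ 2 by positivity]

theorem le_sqrt_mul_of_forall_two_mul_le {x a b : ℝ} (h : ∀ c > 0, 2 * x ≤ c * a + b / c) :
    x ≤ √(b * a) := by
  rcases le_or_gt x 0 with hx | hx
  · exact hx.trans (Real.sqrt_nonneg _)
  rcases le_or_gt b 0 with hb | hb
  · -- a small enough `c` makes the right-hand side smaller than `2 * x`
    have hc : 0 < x / (|a| + 1) := by positivity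
    have hca : x / (|a| + 1) * a < x := by
      rw [div_mul_eq_mul_div, div_lt_iff₀ (by positivity)]
      nlinarith [le_abs_self a]
    have hbc : b / (x / (|a| + 1)) ≤ 0 := div_nonpos_of_nonpos_of_nonneg hb hc.le
    linarith [h _ hc]
  · refine Real.le_sqrt_of_sq_le ?_
    have hbx := h (b / x) (by positivity)
    rw [div_div_cancel₀ hb.ne', div_mul_eq_mul_div] at hbx
    have : x ≤ b * a / x := by linarith
    simpa [sq] using (le_div_iff₀ hx).1 this

theorem norm_sub_le_sub_of_norm_deriv_le_deriv {F : Type*} [NormedAddCommGroup F]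
    [NormedSpace ℝ F] {f f' : ℝ → F} {B B' : ℝ → ℝ} {a b : ℝ} (hab : a ≤ b)
    (hf : ∀ s ∈ Icc a b, HasDerivAt f (f' s) s) (hB : ∀ s ∈ Icc a b, HasDerivAt B (B' s) s)
    (bound : ∀ s ∈ Ico a b, ‖f' s‖ ≤ B' s) : ‖f b - f a‖ ≤ B b - B a :=
  image_norm_le_of_norm_deriv_right_le_deriv_boundary' (f := fun s => f s - f a)
    (fun s hs => ((hf s hs).sub_const _).continuousAt.continuousWithinAt)
    (fun s hs => ((hf s (Ico_subset_Icc_self hs)).sub_const _).hasDerivWithinAt)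
    (by simp) (fun s hs => ((hB s hs).sub_const _).continuousAt.continuousWithinAt)
    (fun s hs => ((hB s (Ico_subset_Icc_self hs)).sub_const _).hasDerivWithinAt) bound
    (right_mem_Icc.2 hab)

theorem two_mul_norm_sub_le_of_gradient_flow {H : Type*} [NormedAddCommGroup H]
    [InnerProductSpace ℝ H] [CompleteSpace H] {E : H → ℝ} {γ g : ℝ → H} {a b c : ℝ}
    (hab : a ≤ b) (hc : 0 < c)
    (hflow : ∀ s ∈ Icc a b, HasGradientAt E (g s) (γ s) ∧ HasDerivAt γ (-(g s)) s) :
    2 * ‖γ b - γ a‖ ≤ c * (E (γ a) - E (γ b)) + (b - a) / c := by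
  have henergy (s) (hs : s ∈ Icc a b) : HasDerivAt (E ∘ γ) (-‖g s‖ ^ 2) s := by
    simpa [inner_neg_right, real_inner_self_eq_norm_sq] using
      (hflow s hs).1.hasDerivAt_comp (hflow s hs).2
  have hmv := norm_sub_le_sub_of_norm_deriv_le_deriv hab (fun s hs => (hflow s hs).2)
    (B := fun s => (s / c - c * (E ∘ γ) s) / 2) (B' := fun s => (c⁻¹ + c * ‖g s‖ ^ 2) / 2)
    (fun s hs => by simpa [div_eq_mul_inv] using
      (((hasDerivAt_id s).mul_const c⁻¹).sub ((henergy s hs).const_mul c)).div_const 2)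
    (fun s _ => by rw [norm_neg]; linarith [two_mul_le_mul_sq_add_inv ‖g s‖ hc])
  simp only [Function.comp] at hmv
  linarith [show b / c - a / c = (b - a) / c by ring]

theorem gradient_flow_distance_estimate_general
    {H : Type*} [NormedAddCommGroup H] [InnerProductSpace ℝ H] [CompleteSpace H]
    (E : H → ℝ) (T : ℝ) (γ : ℝ → H) (g : ℝ → H)
    (hflow : ∀ t ∈ Ico (0 : ℝ) T,
      HasGradientAt E (g t) (γ t) ∧ HasDerivAt γ (-(g t)) t) :
    ∀ t ∈ Ico (0 : ℝ) T,
      ‖γ t - γ 0‖ ≤ Real.sqrt (t * (E (γ 0) - E (γ t))) := by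
  rintro t ⟨ht0, htT⟩
  refine le_sqrt_mul_of_forall_two_mul_le fun c hc => ?_
  simpa using
    two_mul_norm_sub_le_of_gradient_flow ht0 hc fun s hs => hflow s ⟨hs.1, hs.2.trans_lt htT⟩

/-- Distance estimate along a gradient flow:
`‖γ(t) − γ(0)‖ ≤ √(t · (E(γ(0)) − E(γ(t))))`. -/
theorem gradient_flow_distance_estimate
    {H : Type*} [NormedAddCommGroup H] [InnerProductSpace ℝ H] [CompleteSpace H]
    (E : H → ℝ) (T : ℝ) (hT : 0 < T) (γ : ℝ → H) (g : ℝ → H)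
    (hflow : ∀ t ∈ Ico (0 : ℝ) T,
      HasGradientAt E (g t) (γ t) ∧ HasDerivAt γ (-(g t)) t)
    (hcont : ContinuousOn g (Ico (0 : ℝ) T)) :
    ∀ t ∈ Ico (0 : ℝ) T,
      ‖γ t - γ 0‖ ≤ Real.sqrt (t * (E (γ 0) - E (γ t))) :=
  gradient_flow_distance_estimate_general E T γ g hflow
end

section
/- Let H be a real inner product space, E : H → ℝ with E(x) ≥ 0 for all x ∈ H, T > 0, and let γ : ℝ → H solve the gradient flow of E on [0,T), with t ↦ ∇E(γ(t)) continuous on [0,T). Then γ is 1/2-Hölder continuous on [0,T) with constant √(E(γ(0))): for all 0 ≤ s ≤ t < T, ‖γ(t) − γ(s)‖ ≤ √(E(γ(s))) · √(t − s) ≤ √(E(γ(0))) · √(t − s). -/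
open Set MeasureTheory Interval

/-! Along the flow `d/dt E(γ t) = -‖g t‖²`, so `∫ₛᵗ ‖g‖² = E(γ s) - E(γ t) ≤ E(γ s)`; this needs
no continuity of `g`, since a derivative of constant sign is automatically integrable. The
displacement `‖γ t - γ s‖ ≤ ∫ₛᵗ ‖g‖` is then bounded by Cauchy–Schwarz,
`(∫ₛᵗ ‖g‖)² ≤ (t - s) ∫ₛᵗ ‖g‖²`. -/

def IsGradientFlowOn {H : Type*} [NormedAddCommGroup H] [InnerProductSpace ℝ H]
    [CompleteSpace H] (E : H → ℝ) (γ g : ℝ → H) (s : Set ℝ) : Prop :=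
  ∀ t ∈ s, HasGradientAt E (g t) (γ t) ∧ HasDerivAt γ (-(g t)) t

theorem HasGradientAt.comp_hasDerivAt {H : Type*} [NormedAddCommGroup H]
    [InnerProductSpace ℝ H] [CompleteSpace H] {E : H → ℝ} {γ : ℝ → H} {g v : H} {t : ℝ}
    (hE : HasGradientAt E g (γ t)) (hγ : HasDerivAt γ v t) :
    HasDerivAt (E ∘ γ) (inner ℝ g v) t :=
  (hasGradientAt_iff_hasFDerivAt.mp hE).comp_hasDerivAt t hγ

theorem IntervalIntegrable.of_sq {f : ℝ → ℝ} {a b : ℝ} (hf : ∀ x, 0 ≤ f x)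
    (hf2 : IntervalIntegrable (fun x => f x ^ 2) volume a b) :
    IntervalIntegrable f volume a b := by
  have hmeas : AEStronglyMeasurable f (volume.restrict (Ι a b)) := by
    have := Real.continuous_sqrt.comp_aestronglyMeasurable hf2.aestronglyMeasurable_restrict_uIoc
    simpa only [Function.comp_def, Real.sqrt_sq (hf _)] using this
  refine (hf2.add (intervalIntegrable_const (c := 1))).mono_fun' hmeas
    (Filter.Eventually.of_forall fun x => ?_)
  simp only [Real.norm_of_nonneg (hf x)]
  nlinarith [sq_nonneg (f x - 1)]

theorem sq_intervalIntegral_le {f : ℝ → ℝ} {a b : ℝ} (hab : a ≤ b)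
    (hf : IntervalIntegrable f volume a b)
    (hf2 : IntervalIntegrable (fun x => f x ^ 2) volume a b) :
    (∫ x in a..b, f x) ^ 2 ≤ (b - a) * ∫ x in a..b, f x ^ 2 := by
  set A := ∫ x in a..b, f x
  set L := b - a
  -- `0 ≤ ∫ (L f - A)²`, expanded
  have key : 0 ≤ L * (L * ∫ x in a..b, f x ^ 2) - L * A ^ 2 := by
    have h := intervalIntegral.integral_nonneg (μ := volume) hab
      fun x _ => sq_nonneg (L * f x - A)
    have hexp : (fun x => (L * f x - A) ^ 2) =
        fun x => L ^ 2 * f x ^ 2 - (2 * L * A) * f x + A ^ 2 := by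
      funext x; ring
    rw [hexp, intervalIntegral.integral_add ((hf2.const_mul _).sub (hf.const_mul _))
        intervalIntegrable_const, intervalIntegral.integral_sub (hf2.const_mul _) (hf.const_mul _),
      intervalIntegral.integral_const_mul, intervalIntegral.integral_const_mul,
      intervalIntegral.integral_const, smul_eq_mul] at h
    linarith
  rcases (sub_nonneg.2 hab).eq_or_lt with hL | hL
  · simp [A, ← sub_eq_zero.1 hL.symm]
  · nlinarith

namespace IsGradientFlowOn

variable {H : Type*} [NormedAddCommGroup H] [InnerProductSpace ℝ H] [CompleteSpace H]
  {E : H → ℝ} {γ g : ℝ → H} {s : Set ℝ} {a b : ℝ}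

theorem mono {s' : Set ℝ} (hγ : IsGradientFlowOn E γ g s) (hs : s' ⊆ s) :
    IsGradientFlowOn E γ g s' :=
  fun t ht => hγ t (hs ht)

theorem hasDerivAt_neg_energy (hγ : IsGradientFlowOn E γ g s) {t : ℝ} (ht : t ∈ s) :
    HasDerivAt (fun u => -E (γ u)) (‖g t‖ ^ 2) t := by
  have := ((hγ t ht).1.comp_hasDerivAt (hγ t ht).2).neg
  rwa [inner_neg_right, real_inner_self_eq_norm_sq, neg_neg] at this

theorem intervalIntegrable_norm_sq (hγ : IsGradientFlowOn E γ g (Icc a b)) (hab : a ≤ b) :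
    IntervalIntegrable (fun t => ‖g t‖ ^ 2) volume a b := by
  rw [← uIcc_of_le hab] at hγ
  exact intervalIntegral.intervalIntegrable_deriv_of_nonneg
    (fun t ht => (hγ.hasDerivAt_neg_energy ht).continuousAt.continuousWithinAt)
    (fun t ht => hγ.hasDerivAt_neg_energy (Ioo_subset_Icc_self ht))
    (fun t _ => sq_nonneg _)

theorem integral_norm_sq (hγ : IsGradientFlowOn E γ g (Icc a b)) (hab : a ≤ b) :
    ∫ t in a..b, ‖g t‖ ^ 2 = E (γ a) - E (γ b) := by
  rw [intervalIntegral.integral_eq_sub_of_hasDerivAt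
    (fun t ht => hγ.hasDerivAt_neg_energy (by rwa [uIcc_of_le hab] at ht))
    (hγ.intervalIntegrable_norm_sq hab)]
  ring

theorem energy_le (hγ : IsGradientFlowOn E γ g (Icc a b)) (hab : a ≤ b) :
    E (γ b) ≤ E (γ a) := by
  have hnonneg : 0 ≤ ∫ t in a..b, ‖g t‖ ^ 2 :=
    intervalIntegral.integral_nonneg hab fun t _ => sq_nonneg _
  linarith [hγ.integral_norm_sq hab]

theorem norm_sub_sq_le (hγ : IsGradientFlowOn E γ g (Icc a b)) (hab : a ≤ b) :
    ‖γ b - γ a‖ ^ 2 ≤ (b - a) * (E (γ a) - E (γ b)) := by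
  have hint := hγ.intervalIntegrable_norm_sq hab
  have hlength : ‖γ b - γ a‖ ≤ ∫ t in a..b, ‖g t‖ := by
    refine norm_sub_le_integral_of_norm_deriv_le_of_le hab
      (fun t ht => (hγ t ht).2.continuousAt.continuousWithinAt)
      (fun t ht => (hγ t (Ioo_subset_Icc_self ht)).2.differentiableAt.differentiableWithinAt)
      (Filter.Eventually.of_forall fun t ht => ?_) (hint.of_sq fun t => norm_nonneg _)
    rw [(hγ t (Ioo_subset_Icc_self ht)).2.deriv, norm_neg]
  calc ‖γ b - γ a‖ ^ 2 ≤ (∫ t in a..b, ‖g t‖) ^ 2 := by gcongr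
    _ ≤ (b - a) * ∫ t in a..b, ‖g t‖ ^ 2 :=
      sq_intervalIntegral_le hab (hint.of_sq fun t => norm_nonneg _) hint
    _ = (b - a) * (E (γ a) - E (γ b)) := by rw [hγ.integral_norm_sq hab]

end IsGradientFlowOn

theorem gradient_flow_holder_general
    {H : Type*} [NormedAddCommGroup H] [InnerProductSpace ℝ H] [CompleteSpace H]
    (E : H → ℝ) (hE : ∀ x, 0 ≤ E x) (T : ℝ) (γ : ℝ → H) (g : ℝ → H)
    (hflow : ∀ t ∈ Ico (0 : ℝ) T,
      HasGradientAt E (g t) (γ t) ∧ HasDerivAt γ (-(g t)) t) :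
    ∀ s t : ℝ, 0 ≤ s → s ≤ t → t < T →
      ‖γ t - γ s‖ ≤ Real.sqrt (E (γ s)) * Real.sqrt (t - s) ∧
      Real.sqrt (E (γ s)) * Real.sqrt (t - s) ≤
        Real.sqrt (E (γ 0)) * Real.sqrt (t - s) := by
  intro s t hs hst htT
  have hflow : IsGradientFlowOn E γ g (Icc 0 t) :=
    fun u hu => hflow u ⟨hu.1, hu.2.trans_lt htT⟩
  constructor
  · rw [← Real.sqrt_mul (hE _)]
    refine Real.le_sqrt_of_sq_le ?_
    calc ‖γ t - γ s‖ ^ 2 ≤ (t - s) * (E (γ s) - E (γ t)) :=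
          (hflow.mono (Icc_subset_Icc_left hs)).norm_sub_sq_le hst
      _ ≤ E (γ s) * (t - s) := by nlinarith [hE (γ t)]
  · gcongr
    exact (hflow.mono (Icc_subset_Icc_right hst)).energy_le hs

/-- Gradient flow trajectories of a nonnegative energy are `1/2`-Hölder
continuous with constant `√(E(γ 0))`. -/
theorem gradient_flow_holder
    {H : Type*} [NormedAddCommGroup H] [InnerProductSpace ℝ H] [CompleteSpace H]
    (E : H → ℝ) (hE : ∀ x, 0 ≤ E x) (T : ℝ) (hT : 0 < T) (γ : ℝ → H) (g : ℝ → H)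
    (hflow : ∀ t ∈ Ico (0 : ℝ) T,
      HasGradientAt E (g t) (γ t) ∧ HasDerivAt γ (-(g t)) t)
    (hcont : ContinuousOn g (Ico (0 : ℝ) T)) :
    ∀ s t : ℝ, 0 ≤ s → s ≤ t → t < T →
      ‖γ t - γ s‖ ≤ Real.sqrt (E (γ s)) * Real.sqrt (t - s) ∧
      Real.sqrt (E (γ s)) * Real.sqrt (t - s) ≤
        Real.sqrt (E (γ 0)) * Real.sqrt (t - s) :=
  gradient_flow_holder_general E hE T γ g hflow
end

section
/- Let E be a finite-dimensional real inner product space and let f : E → ℝ be differentiable everywhere with f(x) ≥ 0 for all x ∈ E. Assume the gradient map x ↦ ∇f(x) is locally Lipschitz (every point of E has a neighborhood on which it is Lipschitz). Then the gradient flow of f admits a global forward solution: for every x₀ ∈ E there exists γ : ℝ → E with γ(0) = x₀ such that for every t ≥ 0, γ has derivative −∇f(γ(t)) at t. -/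
/-!
Along a solution of `γ' = -∇f(γ)` one has `(f ∘ γ)' = -‖∇f(γ)‖²`, and by AM-GM
`‖γ'‖ ≤ (1 + ‖∇f(γ)‖²) / 2`; integrating, `‖γ t - γ 0‖ ≤ (f (γ 0) - f (γ t) + t) / 2`, so for
`f ≥ 0` a solution on `[0, T]` cannot leave the ball of radius `(f (γ 0) + T) / 2`. On a slightly
larger compact ball the field is bounded and Lipschitz, so Picard–Lindelöf gives local solutions of
one fixed length from every point of that ball, and finitely many of them concatenate to a
solution on `[0, T]`. By uniqueness these solutions agree on their common domains, which patches
them into a global forward solution.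
-/

open Set Gradient Metric Topology NNReal

section IntegralCurve

variable {E : Type*} [NormedAddCommGroup E] [NormedSpace ℝ E]

theorem IsIntegralCurveOn.ite_Icc_union_Icc {γ σ : ℝ → E} {v : ℝ → E → E} {a b c : ℝ}
    (hγ : IsIntegralCurveOn γ v (Icc a b)) (hσ : IsIntegralCurveOn σ v (Icc b c))
    (hb : γ b = σ b) :
    IsIntegralCurveOn (fun t => if t ≤ b then γ t else σ t) v (Icc a b ∪ Icc b c) := by
  set g : ℝ → E := fun t => if t ≤ b then γ t else σ t
  have hasDerivWithinAt_of_eqOn : ∀ {s : Set ℝ} {η : ℝ → E}, IsClosed s →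
      IsIntegralCurveOn η v s → EqOn g η s → ∀ t, HasDerivWithinAt g (v t (g t)) s t := by
    intro s η hs hη hgη t
    by_cases ht : t ∈ s
    · rw [hgη ht]
      exact (hη t ht).congr hgη (hgη ht)
    · exact HasFDerivWithinAt.of_notMem_closure (hs.closure_eq.symm ▸ ht)
  have hγg : EqOn g γ (Icc a b) := fun t ht => if_pos ht.2
  have hσg : EqOn g σ (Icc b c) := fun t ht => by
    rcases ht.1.eq_or_lt with rfl | hlt
    · simp [g, hb]
    · exact if_neg hlt.not_ge
  exact fun t _ => (hasDerivWithinAt_of_eqOn isClosed_Icc hγ hγg t).union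
    (hasDerivWithinAt_of_eqOn isClosed_Icc hσ hσg t)

variable {v : E → E}

theorem LocallyLipschitz.eqOn_of_isIntegralCurveOn_Icc (hv : LocallyLipschitz v)
    {γ γ' : ℝ → E} {a b t₀ : ℝ} (hγ : IsIntegralCurveOn γ (fun _ => v) (Icc a b))
    (hγ' : IsIntegralCurveOn γ' (fun _ => v) (Icc a b)) (ht₀ : t₀ ∈ Ioo a b)
    (h : γ t₀ = γ' t₀) : EqOn γ γ' (Icc a b) := by
  obtain ⟨K, hK⟩ := hv.locallyLipschitzOn.exists_lipschitzOnWith_of_compact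
    ((isCompact_Icc.image_of_continuousOn hγ.continuousOn).union
      (isCompact_Icc.image_of_continuousOn hγ'.continuousOn))
  have hasDerivAt_of : ∀ {η : ℝ → E}, IsIntegralCurveOn η (fun _ => v) (Icc a b) →
      ∀ t ∈ Ioo a b, HasDerivAt η (v (η t)) t :=
    fun hη t ht => (hη t (Ioo_subset_Icc_self ht)).hasDerivAt (Icc_mem_nhds ht.1 ht.2)
  exact ODE_solution_unique_of_mem_Icc (v := fun _ => v) (fun _ _ => hK) ht₀
    hγ.continuousOn (hasDerivAt_of hγ)
    (fun t ht => Or.inl (mem_image_of_mem γ (Ioo_subset_Icc_self ht)))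
    hγ'.continuousOn (hasDerivAt_of hγ')
    (fun t ht => Or.inr (mem_image_of_mem γ' (Ioo_subset_Icc_self ht))) h

theorem LocallyLipschitz.exists_forall_hasDerivAt_of_forall_isIntegralCurveOn_Icc
    (hv : LocallyLipschitz v) {x₀ : E} {ε : ℝ} (hε : 0 < ε)
    (hsol : ∀ n : ℕ, ∃ Γ : ℝ → E, Γ 0 = x₀ ∧
      IsIntegralCurveOn Γ (fun _ => v) (Icc (-ε) (n + 1))) :
    ∃ γ : ℝ → E, γ 0 = x₀ ∧ ∀ t, 0 ≤ t → HasDerivAt γ (v (γ t)) t := by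
  choose Γ hΓ0 hΓ using hsol
  have agree : ∀ m n : ℕ, EqOn (Γ m) (Γ n) (Icc (-ε) (min (m : ℝ) n + 1)) := fun m n =>
    hv.eqOn_of_isIntegralCurveOn_Icc
      ((hΓ m).mono (Icc_subset_Icc_right (by gcongr; exact min_le_left _ _)))
      ((hΓ n).mono (Icc_subset_Icc_right (by gcongr; exact min_le_right _ _)))
      ⟨by linarith, by positivity⟩ ((hΓ0 m).trans (hΓ0 n).symm)
  refine ⟨fun t => Γ ⌈t⌉₊ t, by simp [hΓ0], fun t ht => ?_⟩
  have htN : t < ⌈t⌉₊ + 1 := by linarith [Nat.le_ceil t]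
  have heq : (fun s => Γ ⌈s⌉₊ s) =ᶠ[𝓝 t] Γ ⌈t⌉₊ := by
    filter_upwards [Ioo_mem_nhds (by linarith : -ε < t) htN] with s hs
    refine agree _ _ ⟨hs.1.le, ?_⟩
    have : s - 1 ≤ min (⌈s⌉₊ : ℝ) ⌈t⌉₊ := le_min (by linarith [Nat.le_ceil s]) (by linarith [hs.2])
    linarith
  exact ((hΓ _ t ⟨by linarith, htN.le⟩).hasDerivAt
    (Icc_mem_nhds (by linarith) htN)).congr_of_eventuallyEq heq

variable [ProperSpace E]

theorem LocallyLipschitz.exists_pos_forall_mem_closedBall_exists_isIntegralCurveOn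
    (hv : LocallyLipschitz v) (x₀ : E) (ρ : ℝ) :
    ∃ ε > 0, ∀ y ∈ closedBall x₀ ρ, ∀ t₀ : ℝ, ∃ σ : ℝ → E, σ t₀ = y ∧
      IsIntegralCurveOn σ (fun _ => v) (Icc (t₀ - ε) (t₀ + ε)) := by
  obtain ⟨K, hK⟩ := hv.locallyLipschitzOn.exists_lipschitzOnWith_of_compact
    (isCompact_closedBall x₀ (ρ + 1))
  obtain ⟨C, hC⟩ := (isCompact_closedBall x₀ (ρ + 1)).exists_bound_of_continuousOn
    hv.continuous.continuousOn
  set L : ℝ≥0 := C.toNNReal + 1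
  have hL : (0 : ℝ) < L := by positivity
  refine ⟨(L : ℝ)⁻¹, inv_pos.2 hL, fun y hy t₀ => ?_⟩
  have hball : closedBall y 1 ⊆ closedBall x₀ (ρ + 1) :=
    closedBall_subset_closedBall' (by linarith [mem_closedBall.1 hy])
  have hpl : IsPicardLindelof (fun _ => v) (tmin := t₀ - (L : ℝ)⁻¹) (tmax := t₀ + (L : ℝ)⁻¹)
      ⟨t₀, by constructor <;> linarith [inv_pos.2 hL]⟩ y 1 0 L K := by
    refine .of_time_independent (fun x hx => (hC x (hball (by simpa using hx))).trans ?_)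
      (by simpa using hK.mono hball) (by simp [hL.ne'])
    simp only [L, NNReal.coe_add, Real.coe_toNNReal', NNReal.coe_one]
    linarith [le_max_left C 0]
  exact hpl.exists_eq_forall_mem_Icc_hasDerivWithinAt₀

theorem LocallyLipschitz.exists_isIntegralCurveOn_Icc_of_forall_mem_closedBall
    (hv : LocallyLipschitz v) {x₀ : E} {T ρ : ℝ} (hT : 0 ≤ T)
    (hbound : ∀ a ∈ Icc 0 T, ∀ γ : ℝ → E, γ 0 = x₀ →
      IsIntegralCurveOn γ (fun _ => v) (Icc 0 a) → γ a ∈ closedBall x₀ ρ) :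
    ∃ γ : ℝ → E, γ 0 = x₀ ∧ IsIntegralCurveOn γ (fun _ => v) (Icc 0 T) := by
  obtain ⟨ε, hε, hloc⟩ := hv.exists_pos_forall_mem_closedBall_exists_isIntegralCurveOn x₀ ρ
  have extend : ∀ k : ℕ, k * ε ≤ T + ε → ∃ γ : ℝ → E, γ 0 = x₀ ∧
      IsIntegralCurveOn γ (fun _ => v) (Icc 0 (k * ε)) := by
    intro k
    induction k with
    | zero =>
      refine fun _ => ⟨fun _ => x₀, rfl, fun t ht => ?_⟩
      simp only [Nat.cast_zero, zero_mul, Icc_self] at ht ⊢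
      exact HasFDerivWithinAt.of_subsingleton subsingleton_singleton
    | succ k ih =>
      intro hk
      have hkT : k * ε ≤ T := by push_cast at hk; linarith
      obtain ⟨γ, hγ0, hγ⟩ := ih (by linarith)
      obtain ⟨σ, hσ, hσγ⟩ := hloc _ (hbound _ ⟨by positivity, hkT⟩ γ hγ0 hγ) (k * ε)
      have hglue := hγ.ite_Icc_union_Icc (hσγ.mono (Icc_subset_Icc_left (by linarith))) hσ.symm
      rw [Icc_union_Icc_eq_Icc (by positivity) (by linarith), ← add_one_mul] at hglue
      exact ⟨_, (if_pos (by positivity : (0 : ℝ) ≤ k * ε)).trans hγ0, by exact_mod_cast hglue⟩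
  obtain ⟨γ, hγ0, hγ⟩ := extend ⌈T / ε⌉₊ <| calc
    _ ≤ (T / ε + 1) * ε := by gcongr; exact (Nat.ceil_lt_add_one (div_nonneg hT hε.le)).le
    _ = T + ε := by field_simp
  exact ⟨γ, hγ0, hγ.mono (Icc_subset_Icc_right ((div_le_iff₀ hε).1 (Nat.le_ceil _)))⟩

theorem LocallyLipschitz.exists_forall_hasDerivAt_of_forall_mem_closedBall
    (hv : LocallyLipschitz v) (x₀ : E)
    (hbound : ∀ T ≥ 0, ∃ ρ, ∀ a ∈ Icc 0 T, ∀ γ : ℝ → E, γ 0 = x₀ →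
      IsIntegralCurveOn γ (fun _ => v) (Icc 0 a) → γ a ∈ closedBall x₀ ρ) :
    ∃ γ : ℝ → E, γ 0 = x₀ ∧ ∀ t, 0 ≤ t → HasDerivAt γ (v (γ t)) t := by
  obtain ⟨ε, hε, hloc⟩ := hv.exists_pos_forall_mem_closedBall_exists_isIntegralCurveOn x₀ 0
  obtain ⟨σ, hσ0, hσ⟩ := hloc x₀ (mem_closedBall_self le_rfl) 0
  have hσ' : IsIntegralCurveOn σ (fun _ => v) (Icc (-ε) 0) :=
    hσ.mono (Icc_subset_Icc (by simp) (by linarith))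
  refine hv.exists_forall_hasDerivAt_of_forall_isIntegralCurveOn_Icc hε fun n => ?_
  obtain ⟨ρ, hρ⟩ := hbound (n + 1) (by positivity)
  obtain ⟨γ, hγ0, hγ⟩ :=
    hv.exists_isIntegralCurveOn_Icc_of_forall_mem_closedBall (by positivity) hρ
  have hglue := hσ'.ite_Icc_union_Icc hγ (hσ0.trans hγ0.symm)
  rw [Icc_union_Icc_eq_Icc (by linarith) (by positivity)] at hglue
  exact ⟨_, (if_pos le_rfl).trans hσ0, hglue⟩

end IntegralCurve

section GradientFlow

variable {E : Type*} [NormedAddCommGroup E] [InnerProductSpace ℝ E] [CompleteSpace E]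

theorem norm_sub_le_of_isIntegralCurveOn_neg_gradient {f : E → ℝ} (hf : Differentiable ℝ f)
    {γ : ℝ → E} {a b : ℝ} (hγ : IsIntegralCurveOn γ (fun _ x => -gradient f x) (Icc a b))
    {t : ℝ} (ht : t ∈ Icc a b) :
    ‖γ t - γ a‖ ≤ (f (γ a) - f (γ t) + (t - a)) / 2 := by
  have hright : ∀ s ∈ Ico a b, HasDerivWithinAt γ (-gradient f (γ s)) (Ici s) s := fun s hs =>
    (hγ s (Ico_subset_Icc_self hs)).mono_of_mem_nhdsWithin (Icc_mem_nhdsGE_of_mem hs)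
  have henergy : ∀ s ∈ Ico a b,
      HasDerivWithinAt (fun u => f (γ u)) (-‖gradient f (γ s)‖ ^ 2) (Ici s) s := by
    intro s hs
    have := (hf (γ s)).hasFDerivAt.comp_hasDerivWithinAt s (hright s hs)
    rwa [← inner_gradient_left, inner_neg_right, real_inner_self_eq_norm_sq] at this
  refine image_norm_le_of_norm_deriv_right_le_deriv_boundary' (f := fun s => γ s - γ a)
    (B := fun s => (f (γ a) - f (γ s) + (s - a)) / 2)
    (hγ.continuousOn.sub continuousOn_const) (fun s hs => (hright s hs).sub_const _) (by simp)
    (((continuousOn_const.sub (hf.continuous.comp_continuousOn hγ.continuousOn)).add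
      (continuousOn_id.sub continuousOn_const)).div_const 2)
    (fun s hs => (((henergy s hs).const_sub _).add
      ((hasDerivWithinAt_id _ _).sub_const a)).div_const 2) (fun s _ => ?_) ht
  rw [norm_neg]
  nlinarith [sq_nonneg (‖gradient f (γ s)‖ - 1)]

end GradientFlow

/-- Global existence of the gradient flow of a nonnegative function with
locally Lipschitz gradient on a finite-dimensional inner product space. -/
theorem gradient_flow_global_existence
    {E : Type*} [NormedAddCommGroup E] [InnerProductSpace ℝ E]
    [FiniteDimensional ℝ E]
    (f : E → ℝ) (hdiff : Differentiable ℝ f) (hpos : ∀ x, 0 ≤ f x)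
    (hlip : LocallyLipschitz (fun x => gradient f x)) :
    ∀ x₀ : E, ∃ γ : ℝ → E, γ 0 = x₀ ∧
      ∀ t : ℝ, 0 ≤ t → HasDerivAt γ (-(gradient f (γ t))) t := by
  intro x₀
  refine hlip.neg.exists_forall_hasDerivAt_of_forall_mem_closedBall (v := fun x => -gradient f x)
    x₀ fun T _ => ⟨(f x₀ + T) / 2, fun a ha γ hγ0 hγ => ?_⟩
  have := norm_sub_le_of_isIntegralCurveOn_neg_gradient hdiff hγ (right_mem_Icc.2 ha.1)
  rw [hγ0] at this
  rw [mem_closedBall, dist_eq_norm]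
  linarith [hpos (γ a), ha.2]
end
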